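/- Let (T̃_i)_{i≥1} be i.i.d. nonnegative random variables with P(T̃_1 > τ) ≥ e^{-bτ} for all τ > 0 and some b > 0, let ν be independent of (T̃_i) with geometric distribution P(ν = k) = 2^{-k} for k = 1, 2, ..., and let T_a = Σ_{i=1}^{ν} T̃_i. Then P(T_a > τ) ≥ e^{-bτ/2} for all τ > 0. -/

import Mathlib

/-!
Each `T̃ᵢ` stochastically dominates an `Exp(b)` variable, so by induction, convolving in one
summand at a time, `T̃₁ + ⋯ + T̃ₖ` dominates the Erlang law `Γ(k, b)`, whose tail is
`e^{-bτ} ∑_{j<k} (bτ)^j / j!`. Conditioning on the independent `ν` gives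
`P(T_a > τ) ≥ ∑_k 2^{-k} P(Γ(k, b) > τ)`, and a Cauchy product with the exponential series
evaluates the right-hand side to `e^{-bτ/2}`: a geometric sum of `Exp(b)` variables is `Exp(b/2)`.
-/

open MeasureTheory ProbabilityTheory

open Real Finset
open scoped Nat ENNReal

/-- `P(Γ(k, b) > s)` for `s ≥ 0`, i.e. `P(Poisson(b s) < k)`. -/
noncomputable def erlangTail (b : ℝ) (k : ℕ) (s : ℝ) : ℝ :=
  exp (-(b * s)) * ∑ j ∈ range k, (b * s) ^ j / j !

/-- The density of `Γ(k + 1, b)`, which is `-(d/ds) erlangTail b (k + 1)`. -/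
noncomputable def erlangDensity (b : ℝ) (k : ℕ) (s : ℝ) : ℝ :=
  b * (b * s) ^ k / k ! * exp (-(b * s))

lemma erlangTail_succ (b : ℝ) (k : ℕ) (s : ℝ) :
    erlangTail b (k + 1) s = erlangTail b k s + exp (-(b * s)) * ((b * s) ^ k / k !) := by
  rw [erlangTail, erlangTail, sum_range_succ, mul_add]

lemma erlangTail_one (b s : ℝ) : erlangTail b 1 s = exp (-(b * s)) := by
  simp [erlangTail]

lemma erlangTail_succ_zero (b : ℝ) (k : ℕ) : erlangTail b (k + 1) 0 = 1 := by
  simp [erlangTail, sum_range_succ']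

lemma erlangTail_nonneg {b s : ℝ} (hbs : 0 ≤ b * s) (k : ℕ) : 0 ≤ erlangTail b k s := by
  unfold erlangTail
  positivity

lemma erlangDensity_nonneg {b s : ℝ} (hb : 0 ≤ b) (hs : 0 ≤ s) (k : ℕ) :
    0 ≤ erlangDensity b k s := by
  unfold erlangDensity
  positivity

lemma continuous_erlangDensity (b : ℝ) (k : ℕ) : Continuous (erlangDensity b k) := by
  unfold erlangDensity
  fun_prop

lemma hasDerivAt_erlangTail (b : ℝ) (k : ℕ) (s : ℝ) :
    HasDerivAt (erlangTail b (k + 1)) (-erlangDensity b k s) s := by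
  have hlin : HasDerivAt (fun s => b * s) b s := by simpa using (hasDerivAt_id s).const_mul b
  have hexp : HasDerivAt (fun s => exp (-(b * s))) (-(b * exp (-(b * s)))) s := by
    simpa [mul_comm] using hlin.neg.exp
  induction k with
  | zero =>
    rw [show erlangTail b 1 = fun s => exp (-(b * s)) from funext (erlangTail_one b)]
    convert hexp using 1
    rw [erlangDensity]; simp
  | succ k ih =>
    have hterm : HasDerivAt (fun s => exp (-(b * s)) * ((b * s) ^ (k + 1) / (k + 1)!))
        (erlangDensity b k s - erlangDensity b (k + 1) s) s := by
      refine (hexp.fun_mul ((hlin.fun_pow (k + 1)).div_const _)).congr_deriv ?_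
      simp only [erlangDensity, Nat.factorial_succ, Nat.cast_mul, Nat.add_sub_cancel]
      push_cast
      field_simp
      ring
    have : erlangTail b (k + 2) = fun s => erlangTail b (k + 1) s
        + exp (-(b * s)) * ((b * s) ^ (k + 1) / (k + 1)!) := by
      funext s; exact erlangTail_succ b (k + 1) s
    rw [this]
    exact (ih.fun_add hterm).congr_deriv (by ring)

lemma integral_erlangDensity_comp_sub (b : ℝ) (k : ℕ) (s c : ℝ) :
    ∫ u in 0..c, erlangDensity b k (s - u)
      = erlangTail b (k + 1) (s - c) - erlangTail b (k + 1) s := by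
  rw [intervalIntegral.integral_comp_sub_left (erlangDensity b k), sub_zero,
    intervalIntegral.integral_eq_sub_of_hasDerivAt (f := -erlangTail b (k + 1))
      (fun v _ => by simpa using (hasDerivAt_erlangTail b k v).neg)
      ((continuous_erlangDensity b k).intervalIntegrable _ _), Pi.neg_apply, Pi.neg_apply]
  ring

lemma integral_erlangDensity_comp_sub_mul_exp (b : ℝ) (k : ℕ) (s : ℝ) :
    ∫ u in 0..s, erlangDensity b k (s - u) * exp (-(b * u))
      = exp (-(b * s)) * ((b * s) ^ (k + 1) / (k + 1)!) := by
  have hsplit : ∀ u, erlangDensity b k (s - u) * exp (-(b * u))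
      = b ^ (k + 1) / k ! * exp (-(b * s)) * (s - u) ^ k := by
    intro u
    have he : exp (-(b * (s - u))) * exp (-(b * u)) = exp (-(b * s)) := by
      rw [← exp_add]; ring_nf
    rw [erlangDensity, mul_assoc, he, mul_pow, pow_succ]
    ring
  simp_rw [hsplit]
  rw [intervalIntegral.integral_const_mul, intervalIntegral.integral_comp_sub_left (· ^ k),
    integral_pow, Nat.factorial_succ]
  push_cast
  field_simp
  ring

lemma hasSum_half_pow_mul_erlangTail (b s : ℝ) :
    HasSum (fun k => (1 / 2 : ℝ) ^ (k + 1) * erlangTail b (k + 1) s) (exp (-(b * s) / 2)) := by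
  have hf : Summable fun j => ‖(b * s / 2) ^ j / (j ! : ℝ)‖ := by
    simpa [norm_div, norm_pow] using Real.summable_pow_div_factorial (|b * s| / 2)
  have hg : Summable fun i => ‖(1 : ℝ) / 2 / 2 ^ i‖ := by
    simpa [abs_of_pos] using (hasSum_geometric_two' 1).summable
  have hexp : HasSum (fun j => (b * s / 2) ^ j / (j ! : ℝ)) (exp (b * s / 2)) := by
    rw [Real.exp_eq_exp_ℝ]; exact NormedSpace.expSeries_div_hasSum_exp _
  -- `2^{-(k+1)} x^j / j! = ((x/2)^j / j!) · 2^{-(k-j+1)}`: a Cauchy product of two known series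
  have hcauchy := (hasSum_sum_range_mul_of_summable_norm hf hg).mul_left (exp (-(b * s)))
  rw [(hasSum_geometric_two' 1).tsum_eq, hexp.tsum_eq, mul_one, ← exp_add] at hcauchy
  rw [show -(b * s) / 2 = -(b * s) + b * s / 2 by ring]
  refine hcauchy.congr_fun fun k => ?_
  rw [erlangTail, mul_left_comm, mul_sum]
  congr 1
  refine sum_congr rfl fun j hj => ?_
  have h2 : (2 : ℝ) ^ k = 2 ^ j * 2 ^ (k - j) := by
    rw [← pow_add, Nat.add_sub_cancel' (Nat.lt_succ_iff.mp (mem_range.mp hj))]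
  rw [div_pow (b * s), div_pow 1, one_pow, pow_succ, h2]
  field_simp

open Set in
lemma conv_Ioi_eq_lintegral (μ ν : Measure ℝ) [SFinite μ] [SFinite ν] (s : ℝ) :
    (μ ∗ ν) (Ioi s) = ∫⁻ x, μ (Ioi (s - x)) ∂ν := by
  rw [Measure.conv, Measure.map_apply measurable_add measurableSet_Ioi,
    Measure.prod_apply_symm (measurable_add measurableSet_Ioi)]
  refine lintegral_congr fun x => congrArg μ ?_
  ext y
  simp [sub_lt_iff_lt_add]

/-- `μ` stochastically dominates `Γ(k, b)`; for `k ≥ 1` the clamp at `0` makes this say that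
`μ` is carried by `(0, ∞)`. -/
def DominatesErlang (b : ℝ) (k : ℕ) (μ : Measure ℝ) : Prop :=
  ∀ r, ENNReal.ofReal (erlangTail b k (max r 0)) ≤ μ (Set.Ioi r)

open Filter Topology Set in
lemma dominatesErlang_one_of_tail {b : ℝ} {μ : Measure ℝ}
    (h : ∀ u > 0, ENNReal.ofReal (exp (-(b * u))) ≤ μ (Ioi u)) : DominatesErlang b 1 μ := by
  have hpos : 1 ≤ μ (Ioi 0) := by
    have hlim : Tendsto (fun u => ENNReal.ofReal (exp (-(b * u)))) (𝓝[>] 0) (𝓝 1) := by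
      have hcont : Continuous fun u => ENNReal.ofReal (exp (-(b * u))) :=
        ENNReal.continuous_ofReal.comp (by fun_prop)
      simpa using (hcont.tendsto 0).mono_left (nhdsWithin_le_nhds (s := Ioi 0))
    exact le_of_tendsto hlim (eventually_nhdsWithin_of_forall fun u hu =>
      (h u hu).trans (measure_mono (Ioi_subset_Ioi (le_of_lt hu))))
  intro r
  rcases le_or_gt r 0 with hr | hr
  · rw [max_eq_right hr, erlangTail_succ_zero, ENNReal.ofReal_one]
    exact hpos.trans (measure_mono (Ioi_subset_Ioi hr))
  · rw [max_eq_left hr.le, erlangTail_one]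
    exact h r hr

lemma DominatesErlang.ae_pos {b : ℝ} {k : ℕ} {μ : Measure ℝ} [IsProbabilityMeasure μ]
    (h : DominatesErlang b (k + 1) μ) : ∀ᵐ x ∂μ, 0 < x := by
  have h0 : μ (Set.Ioi 0) = 1 :=
    le_antisymm prob_le_one (by simpa [erlangTail_succ_zero] using h 0)
  rw [ae_iff_measure_eq measurableSet_Ioi.nullMeasurableSet, measure_univ]
  exact h0

open Set in
/-- With `G r = erlangTail b (k + 1) (max r 0)`, the layer-cake formula gives
`∫ G(s - x) dμ = G s + ∫₀ˢ (-G')(s - u) μ(u, ∞) du`; bounding `μ(u, ∞) ≥ e^{-bu}` leaves the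
convolution identity `Γ(k + 1, b) ∗ Exp(b) = Γ(k + 2, b)`. -/
lemma ofReal_erlangTail_le_lintegral {b s : ℝ} (hb : 0 ≤ b) (hs : 0 < s) (k : ℕ)
    {μ : Measure ℝ} [IsProbabilityMeasure μ] (hμ : DominatesErlang b 1 μ) :
    ENNReal.ofReal (erlangTail b (k + 2) s)
      ≤ ∫⁻ x, ENNReal.ofReal (erlangTail b (k + 1) (max (s - x) 0)) ∂μ := by
  -- clamped so that `g ≥ 0` on all of `(0, ∞)`, as the layer-cake formula requires
  set g : ℝ → ℝ := fun u => erlangDensity b k (max (s - u) 0)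
  have hg_nonneg : ∀ u, 0 ≤ g u := fun u => erlangDensity_nonneg hb (le_max_right _ _) k
  have hg_cont : Continuous g := (continuous_erlangDensity b k).comp (by fun_prop)
  have hsplit : ∀ x, 0 ≤ x → ENNReal.ofReal (erlangTail b (k + 1) (max (s - x) 0))
      = ENNReal.ofReal (erlangTail b (k + 1) s) + ENNReal.ofReal (∫ u in 0..min x s, g u) := by
    intro x hx
    have hmin : 0 ≤ min x s := le_min hx hs.le
    have hg : ∫ u in 0..min x s, g u = ∫ u in 0..min x s, erlangDensity b k (s - u) := by
      refine intervalIntegral.integral_congr fun u hu => ?_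
      rw [uIcc_of_le hmin] at hu
      simp only [g, max_eq_left (sub_nonneg.2 (hu.2.trans (min_le_right x s)))]
    rw [← ENNReal.ofReal_add (erlangTail_nonneg (by positivity) _)
      (intervalIntegral.integral_nonneg hmin fun u _ => hg_nonneg u), hg,
      integral_erlangDensity_comp_sub, add_sub_cancel, ← max_sub_sub_left, sub_self]
  have hlayer := lintegral_comp_eq_lintegral_meas_lt_mul μ (f := fun x => min x s) (g := g)
    (hμ.ae_pos.mono fun x hx => le_min hx.le hs.le) (by fun_prop)
    (fun _ _ => hg_cont.intervalIntegrable _ _) (ae_of_all _ hg_nonneg)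
  have hF : Continuous fun u => erlangDensity b k (s - u) * exp (-(b * u)) :=
    ((continuous_erlangDensity b k).comp (by fun_prop)).mul (by fun_prop)
  have htail : ENNReal.ofReal (∫ u in 0..s, erlangDensity b k (s - u) * exp (-(b * u)))
      ≤ ∫⁻ t in Ioi 0, μ {x | t < min x s} * ENNReal.ofReal (g t) := by
    rw [intervalIntegral.integral_of_le hs.le, integral_Ioc_eq_integral_Ioo,
      ofReal_integral_eq_lintegral_ofReal (hF.integrableOn_Icc.mono_set Ioo_subset_Icc_self)]
    · refine le_trans (setLIntegral_mono' measurableSet_Ioo fun t ht => ?_)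
        (lintegral_mono_set Ioo_subset_Ioi_self)
      have hts : {x | t < min x s} = Ioi t := by ext x; simp [ht.2]
      have hexp := hμ t
      rw [max_eq_left ht.1.le, erlangTail_one] at hexp
      rw [hts, mul_comm (μ _), ENNReal.ofReal_mul (erlangDensity_nonneg hb (by linarith [ht.2]) k)]
      simp only [g, max_eq_left (sub_nonneg.2 ht.2.le)]
      gcongr
    · filter_upwards [ae_restrict_mem measurableSet_Ioo] with t ht
      exact mul_nonneg (erlangDensity_nonneg hb (by linarith [ht.2]) k) (exp_pos _).le
  calc ENNReal.ofReal (erlangTail b (k + 2) s)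
      = ENNReal.ofReal (erlangTail b (k + 1) s)
        + ENNReal.ofReal (∫ u in 0..s, erlangDensity b k (s - u) * exp (-(b * u))) := by
        rw [integral_erlangDensity_comp_sub_mul_exp, ← ENNReal.ofReal_add
          (erlangTail_nonneg (by positivity) _) (by positivity), ← erlangTail_succ]
    _ ≤ ENNReal.ofReal (erlangTail b (k + 1) s)
        + ∫⁻ t in Ioi 0, μ {x | t < min x s} * ENNReal.ofReal (g t) := by gcongr
    _ = ∫⁻ x, ENNReal.ofReal (erlangTail b (k + 1) (max (s - x) 0)) ∂μ := by
        rw [← hlayer, lintegral_congr_ae (hμ.ae_pos.mono fun x hx => hsplit x hx.le),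
          lintegral_add_left measurable_const, lintegral_const, measure_univ, mul_one]

lemma DominatesErlang.conv {b : ℝ} (hb : 0 ≤ b) {k : ℕ} {μY μX : Measure ℝ} [SFinite μY]
    [IsProbabilityMeasure μX] (hY : DominatesErlang b (k + 1) μY) (hX : DominatesErlang b 1 μX) :
    DominatesErlang b (k + 2) (μY ∗ μX) := by
  intro s
  rw [conv_Ioi_eq_lintegral]
  refine le_trans ?_ (lintegral_mono fun x => hY (s - x))
  rcases le_or_gt s 0 with hs | hs
  · rw [max_eq_right hs, erlangTail_succ_zero, ENNReal.ofReal_one]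
    calc (1 : ℝ≥0∞) = ∫⁻ _, 1 ∂μX := by simp
      _ ≤ _ := lintegral_mono_ae (hX.ae_pos.mono fun x hx => by
        rw [max_eq_right (by linarith), erlangTail_succ_zero, ENNReal.ofReal_one])
  · rw [max_eq_left hs.le]
    exact ofReal_erlangTail_le_lintegral hb hs k hX

lemma dominatesErlang_map_sum_range {Ω : Type*} [MeasurableSpace Ω] {μ : Measure Ω}
    [IsProbabilityMeasure μ] {b : ℝ} (hb : 0 ≤ b) {X : ℕ → Ω → ℝ} (hX : ∀ i, Measurable (X i))
    (hindep : iIndepFun X μ) (hX1 : ∀ i, DominatesErlang b 1 (μ.map (X i))) (m : ℕ) :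
    DominatesErlang b (m + 1) (μ.map (∑ i ∈ range (m + 1), X i)) := by
  induction m with
  | zero => simpa using hX1 0
  | succ m ih =>
    have hS : AEMeasurable (∑ i ∈ range (m + 1), X i) μ :=
      Finset.aemeasurable_sum _ fun i _ => (hX i).aemeasurable
    have hSX := hindep.indepFun_finsetSum_of_notMem hX (notMem_range_self (n := m + 1))
    have : IsProbabilityMeasure (μ.map (X (m + 1))) :=
      Measure.isProbabilityMeasure_map (hX _).aemeasurable
    rw [sum_range_succ, hSX.map_add_eq_map_conv_map₀ hS (hX _).aemeasurable]
    exact ih.conv hb (hX1 _)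

lemma measure_sum_range_mem_eq_tsum {Ω : Type*} [MeasurableSpace Ω] {μ : Measure Ω}
    {ν : Ω → ℕ} {X : ℕ → Ω → ℝ} (hν : Measurable ν) (hX : ∀ i, Measurable (X i))
    (hνX : IndepFun ν (fun ω i => X i ω) μ) {A : Set ℝ} (hA : MeasurableSet A) :
    μ {ω | ∑ i ∈ range (ν ω), X i ω ∈ A}
      = ∑' k, μ {ω | ν ω = k} * μ {ω | ∑ i ∈ range k, X i ω ∈ A} := by
  have hsum : ∀ k, Measurable fun f : ℕ → ℝ => ∑ i ∈ range k, f i := fun k => by fun_prop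
  have hdecomp : {ω | ∑ i ∈ range (ν ω), X i ω ∈ A}
      = ⋃ k, {ω | ν ω = k} ∩ {ω | ∑ i ∈ range k, X i ω ∈ A} := by
    ext ω
    simp
  rw [hdecomp, measure_iUnion]
  · exact tsum_congr fun k =>
      (hνX.comp measurable_id (hsum k)).measure_inter_preimage_eq_mul _ _
        (measurableSet_singleton k) hA
  · intro i j hij
    exact Set.disjoint_left.2 fun ω hi hj => hij (hi.1.symm.trans hj.1)
  · exact fun k => (hν (measurableSet_singleton k)).inter
      ((Finset.measurable_sum _ fun i _ => hX i) hA)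

lemma ofReal_exp_le_measure_geometric_sum {Ω : Type*} [MeasurableSpace Ω] {μ : Measure Ω}
    {ν : Ω → ℕ} {X : ℕ → Ω → ℝ} {b τ : ℝ} (hν : Measurable ν) (hX : ∀ i, Measurable (X i))
    (hνX : IndepFun ν (fun ω i => X i ω) μ)
    (hνgeom : ∀ k : ℕ, μ {ω | ν ω = k + 1} = ENNReal.ofReal ((1 / 2) ^ (k + 1)))
    (hS : ∀ k, DominatesErlang b (k + 1) (μ.map (∑ i ∈ range (k + 1), X i))) (hb : 0 ≤ b)
    (hτ : 0 ≤ τ) :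
    ENNReal.ofReal (exp (-(b * τ) / 2)) ≤ μ {ω | τ < ∑ i ∈ range (ν ω), X i ω} := by
  have hgeom := hasSum_half_pow_mul_erlangTail b τ
  calc ENNReal.ofReal (exp (-(b * τ) / 2))
      = ∑' k, ENNReal.ofReal ((1 / 2) ^ (k + 1)) * ENNReal.ofReal (erlangTail b (k + 1) τ) := by
        rw [← hgeom.tsum_eq, ENNReal.ofReal_tsum_of_nonneg (fun k => mul_nonneg (by positivity)
          (erlangTail_nonneg (mul_nonneg hb hτ) _)) hgeom.summable]
        exact tsum_congr fun k => ENNReal.ofReal_mul (by positivity)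
    _ ≤ ∑' k, μ {ω | ν ω = k + 1} * μ {ω | ∑ i ∈ range (k + 1), X i ω ∈ Set.Ioi τ} := by
        refine ENNReal.tsum_le_tsum fun k => ?_
        rw [hνgeom]
        gcongr
        have := hS k τ
        rw [max_eq_left hτ, Measure.map_apply (by fun_prop) measurableSet_Ioi] at this
        simpa [Set.preimage, Finset.sum_apply] using this
    _ ≤ ∑' k, μ {ω | ν ω = k} * μ {ω | ∑ i ∈ range k, X i ω ∈ Set.Ioi τ} :=
        ENNReal.tsum_comp_le_tsum_of_injective Nat.succ_injective _
    _ = μ {ω | τ < ∑ i ∈ range (ν ω), X i ω} :=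
        (measure_sum_range_mem_eq_tsum hν hX hνX measurableSet_Ioi).symm

theorem stmt_13_general
    {Ω : Type*} [MeasureSpace Ω] [IsProbabilityMeasure (ℙ : Measure Ω)]
    (T : ℕ → Ω → ℝ) (ν : Ω → ℕ) (Ta : Ω → ℝ) (b : ℝ) (hb : 0 < b)
    (hmeas : ∀ i, Measurable (T i)) (hνmeas : Measurable ν)
    (hindep : iIndepFun T ℙ)
    (hident : ∀ i j, IdentDistrib (T i) (T j) ℙ ℙ)
    (hνT : IndepFun ν (fun ω i => T i ω) ℙ)
    (hν : ∀ k : ℕ, 1 ≤ k → (ℙ {ω | ν ω = k}).toReal = (1 / 2 : ℝ) ^ k)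
    (hTa : ∀ ω, Ta ω = ∑ i ∈ Finset.range (ν ω), T (i + 1) ω)
    (htail : ∀ τ > 0, (ℙ {ω | τ < T 1 ω}).toReal ≥ Real.exp (-b * τ)) :
    ∀ τ > 0, (ℙ {ω | τ < Ta ω}).toReal ≥ Real.exp (-b * τ / 2) := by
  intro τ hτ
  have hT1 : DominatesErlang b 1 (Measure.map (T 1) ℙ) :=
    dominatesErlang_one_of_tail fun u hu => by
      rw [Measure.map_apply (hmeas 1) measurableSet_Ioi]
      exact ENNReal.ofReal_le_of_le_toReal (by rw [← neg_mul]; exact htail u hu)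
  have hS : ∀ k, DominatesErlang b (k + 1) (Measure.map (∑ i ∈ range (k + 1), T (i + 1)) ℙ) :=
    dominatesErlang_map_sum_range hb.le (fun i => hmeas (i + 1))
      (hindep.precomp Nat.succ_injective) fun i => (hident (i + 1) 1).map_eq ▸ hT1
  have hνX : IndepFun ν (fun ω i => T (i + 1) ω) ℙ :=
    hνT.comp measurable_id
      (measurable_pi_lambda (fun (f : ℕ → ℝ) i => f (i + 1)) fun i => measurable_pi_apply (i + 1))
  have hνgeom : ∀ k : ℕ, ℙ {ω | ν ω = k + 1} = ENNReal.ofReal ((1 / 2) ^ (k + 1)) := fun k => by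
    rw [← hν (k + 1) (by omega), ENNReal.ofReal_toReal (measure_ne_top _ _)]
  have key := ofReal_exp_le_measure_geometric_sum hνmeas (fun i => hmeas (i + 1)) hνX hνgeom hS
    hb.le hτ.le
  simp_rw [← hTa] at key
  rw [neg_mul]
  exact (ENNReal.ofReal_le_iff_le_toReal (measure_ne_top _ _)).1 key

/-- If `T̃_i` are i.i.d. nonnegative with `P(T̃_1 > τ) ≥ e^{-bτ}` for all
`τ > 0` (`b > 0`), and `ν` is an independent geometric variable with `P(ν = k) = 2^{-k}`,
then the geometric compound `T_a = Σ_{i=1}^{ν} T̃_i` satisfies `P(T_a > τ) ≥ e^{-bτ/2}`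
for all `τ > 0`. -/
theorem stmt_13
    {Ω : Type*} [MeasureSpace Ω] [IsProbabilityMeasure (ℙ : Measure Ω)]
    (T : ℕ → Ω → ℝ) (ν : Ω → ℕ) (Ta : Ω → ℝ) (b : ℝ) (hb : 0 < b)
    (hmeas : ∀ i, Measurable (T i)) (hνmeas : Measurable ν)
    (hindep : iIndepFun T ℙ)
    (hident : ∀ i j, IdentDistrib (T i) (T j) ℙ ℙ)
    (hnonneg : ∀ i ω, 0 ≤ T i ω)
    (hνT : IndepFun ν (fun ω i => T i ω) ℙ)
    (hν : ∀ k : ℕ, 1 ≤ k → (ℙ {ω | ν ω = k}).toReal = (1 / 2 : ℝ) ^ k)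
    (hTa : ∀ ω, Ta ω = ∑ i ∈ Finset.range (ν ω), T (i + 1) ω)
    (htail : ∀ τ > 0, (ℙ {ω | τ < T 1 ω}).toReal ≥ Real.exp (-b * τ)) :
    ∀ τ > 0, (ℙ {ω | τ < Ta ω}).toReal ≥ Real.exp (-b * τ / 2) :=
  stmt_13_general T ν Ta b hb hmeas hνmeas hindep hident hνT hν hTa htail
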